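/- arXiv:2502.06621 — 6 statements merged into one kernel-verified Lean document; each statement's English description precedes it below -/
import Mathlib

section
/- Let A be an infinite set and n ≥ 2. No cyclic operation f : Aⁿ → A preserves the inequality relation ≠. That is, if f satisfies f(x₁, ..., xₙ) = f(x₂, ..., xₙ, x₁) for all inputs, then there exist tuples (a₁,...,aₙ) and (b₁,...,bₙ) with aᵢ ≠ bᵢ for all i but f(a₁,...,aₙ) = f(b₁,...,bₙ). -/
theorem exists_ne_forall_eq_of_perm_invariant {ι A : Type*} (a : ι ↪ A) (σ : Equiv.Perm ι)
    (hσ : ∀ i, σ i ≠ i) (f : (ι → A) → A) (hf : ∀ x : ι → A, f x = f (x ∘ σ)) :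
    ∃ x y : ι → A, (∀ i, x i ≠ y i) ∧ f x = f y :=
  ⟨a, a ∘ σ, fun i h => hσ i (a.injective h).symm, hf a⟩

/-- On an infinite set, no cyclic operation of arity `n ≥ 2` preserves `≠`. -/
theorem stmt_2 {A : Type*} [Infinite A] (n : ℕ) (hn : 2 ≤ n)
    (f : (Fin n → A) → A)
    (hcyc : ∀ x : Fin n → A, f x = f (fun i => x (finRotate n i))) :
    ∃ a b : Fin n → A, (∀ i, a i ≠ b i) ∧ f a = f b := by
  have hrot : ∀ i, finRotate n i ≠ i := fun i =>
    Equiv.Perm.mem_support.mp (by simp [support_finRotate_of_le hn])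
  exact exists_ne_forall_eq_of_perm_invariant (Fin.valEmbedding.trans (Infinite.natEmbedding A))
    (finRotate n) hrot f hcyc
end

section
/- Let B be a structure on a set equipped with a linear order < preserved by all automorphisms of B, let S be a finite subset of the domain, and let f be an n-ary operation from Sⁿ to the domain of B. If there exist automorphisms α₁, α₂ of B such that α₁(f(s₁,...,sₙ)) = α₂(f(s₂,...,sₙ,s₁)) for all s₁,...,sₙ ∈ S, then f is cyclic, i.e., f(s₁,...,sₙ) = f(s₂,...,sₙ,s₁) for all s₁,...,sₙ ∈ S. -/
/-- A strictly monotone self-map whose iterate fixes a point fixes that point. -/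
lemma iterate_fix_aux {β : Type*} [LinearOrder β] (γ : β ≃o β) (a : β) (m : ℕ)
    (hfix : γ^[m + 1] a = a) : γ a = a := by
  rcases lt_trichotomy (γ a) a with hlt | heq | hgt
  · have dec : ∀ k : ℕ, γ^[k + 1] a < a := by
      intro k
      induction k with
      | zero => simpa using hlt
      | succ k ih =>
        have : γ (γ^[k + 1] a) < γ a := γ.strictMono ih
        calc γ^[k + 2] a = γ (γ^[k+1] a) := Function.iterate_succ_apply' γ _ a
          _ < γ a := this
          _ < a := hlt
    exact absurd hfix (ne_of_lt (dec m))
  · exact heq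
  · have inc : ∀ k : ℕ, a < γ^[k + 1] a := by
      intro k
      induction k with
      | zero => simpa using hgt
      | succ k ih =>
        have : γ a < γ (γ^[k + 1] a) := γ.strictMono ih
        calc a < γ a := hgt
          _ < γ (γ^[k+1] a) := this
          _ = γ^[k + 2] a := (Function.iterate_succ_apply' γ _ a).symm
    exact absurd hfix (ne_of_gt (inc m))

/-- If `B` carries a linear order preserved by its automorphisms, `S` is a finite
subset, and `f : Sⁿ → B` is pseudo-cyclic modulo two order-preserving automorphisms
`α₁, α₂`, then `f` is cyclic on `S`. -/
theorem stmt_3 {β : Type*} [LinearOrder β] (n : ℕ) (S : Set β) (hS : S.Finite)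
    (f : (Fin n → β) → β) (α₁ α₂ : β ≃o β)
    (h : ∀ x : Fin n → β, (∀ i, x i ∈ S) →
      α₁ (f x) = α₂ (f (fun i => x (finRotate n i)))) :
    ∀ x : Fin n → β, (∀ i, x i ∈ S) → f x = f (fun i => x (finRotate n i)) := by
  intro x hx
  cases n with
  | zero =>
    congr 1
  | succ m =>
    set γ : β ≃o β := α₁.trans α₂.symm with hγ
    have key : ∀ y : Fin (m + 1) → β, (∀ i, y i ∈ S) →
        f (fun i => y (finRotate (m + 1) i)) = γ (f y) := by
      intro y hy
      have hy' := h y hy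
      show f (fun i => y (finRotate (m + 1) i)) = α₂.symm (α₁ (f y))
      rw [hy', OrderIso.symm_apply_apply]
    open Fin.NatCast in
    have iter : ∀ k : ℕ, f (fun i => x (i + (k : Fin (m + 1)))) = γ^[k] (f x) := by
      intro k
      induction k with
      | zero => simp
      | succ k ih =>
        have hyk : ∀ i, (fun i => x (i + (k : Fin (m + 1)))) i ∈ S := fun i => hx _
        have heq : (fun i => x (i + ((k + 1 : ℕ) : Fin (m + 1)))) =
            (fun i => (fun j => x (j + (k : Fin (m + 1)))) (finRotate (m + 1) i)) := by
          funext i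
          congr 1
          rw [finRotate_succ_apply]
          push_cast
          abel
        rw [heq, key _ hyk, ih, ← Function.iterate_succ_apply' γ k (f x)]
    open Fin.NatCast in
    have hfix : γ^[m + 1] (f x) = f x := by
      have := iter (m + 1)
      rw [Fin.natCast_self] at this
      simpa using this.symm
    have hγfix : γ (f x) = f x := iterate_fix_aux γ (f x) m hfix
    rw [key x hx, hγfix]
end

section
/- Let A and B be relational structures over disjoint signatures τ and σ. Then the automorphism group of the wreath product structure A ≀ B equals the wreath product Aut(A) ≀ Aut(B) acting on A × B. In particular, every automorphism w of A ≀ B is of the form (a, b) ↦ (g_{h(b)}(a), h(b)) for some h ∈ Aut(B) and a family (g_c)_{c∈B} of automorphisms of A. -/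
/-!
An automorphism `w` of `A ≀ B` preserves the equivalence relation `E` ("same `B`-coordinate"),
so it permutes the fibres `A × {b}`: it induces a bijection `h` of `B` and, for each `b`, a
bijection `A × {b} → A × {h b}`, i.e. a permutation `g_{h b}` of `A`. Feeding tuples lying in a
single fibre into the `τ`-relations shows each `g_c` is an automorphism of `A`, and feeding
tuples with a fixed `A`-coordinate into the `σ`-relations shows `h` is an automorphism of `B`.
Conversely such maps visibly preserve `E` and all relations.
-/

section

variable {α β β' : Type*}

theorem Equiv.exists_eq_fiberwise_of_snd_eq_iff [Nonempty α]
    (w : α × β ≃ α × β') (hw : ∀ p q, (w p).2 = (w q).2 ↔ p.2 = q.2) :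
    ∃ (h : β ≃ β') (g : β' → α ≃ α), ∀ p, w p = (g (h p.2) p.1, h p.2) := by
  obtain ⟨a₀⟩ := ‹Nonempty α›
  have hw' : ∀ p q, (w.symm p).2 = (w.symm q).2 ↔ p.2 = q.2 := fun p q => by
    simpa using (hw (w.symm p) (w.symm q)).symm
  let h : β ≃ β' :=
    { toFun b := (w (a₀, b)).2
      invFun c := (w.symm (a₀, c)).2
      left_inv b := by simpa using (hw' (a₀, (w (a₀, b)).2) (w (a₀, b))).2 rfl
      right_inv c := by simpa using (hw (a₀, (w.symm (a₀, c)).2) (w.symm (a₀, c))).2 rfl }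
  have hsnd : ∀ p, (w p).2 = h p.2 := fun p => (hw p (a₀, p.2)).2 rfl
  have hsnd' : ∀ p, (w.symm p).2 = h.symm p.2 := fun p => (hw' p (a₀, p.2)).2 rfl
  let g (c : β') : α ≃ α :=
    { toFun a := (w (a, h.symm c)).1
      invFun a' := (w.symm (a', c)).1
      left_inv a := by
        have : ((w (a, h.symm c)).1, c) = w (a, h.symm c) := Prod.ext rfl (by simp [hsnd])
        simp [this]
      right_inv a' := by
        have : ((w.symm (a', c)).1, h.symm c) = w.symm (a', c) := Prod.ext rfl (hsnd' (a', c)).symm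
        simp [this] }
  exact ⟨h, g, fun p => Prod.ext (by simp [g]) (hsnd p)⟩

theorem forall_rel_fiberwise_iff {ι : Type*} {κ : ι → Type*} (R : ∀ i, (κ i → α) → Prop)
    (w : α × β → α × β') (h : β ≃ β') (g : β' → α ≃ α)
    (hw : ∀ p, w p = (g (h p.2) p.1, h p.2)) :
    (∀ i (t : κ i → α × β),
      ((∀ j k, (w (t j)).2 = (w (t k)).2) ∧ R i (fun j => (w (t j)).1)) ↔
        ((∀ j k, (t j).2 = (t k).2) ∧ R i (fun j => (t j).1))) ↔
      ∀ b i (t : κ i → α), R i (fun j => g b (t j)) ↔ R i t := by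
  simp only [hw, h.apply_eq_iff_eq]
  constructor
  · intro H b i t
    simpa using H i fun j => (t j, h.symm b)
  · intro H i t
    refine and_congr_right fun hs => ?_
    rcases isEmpty_or_nonempty (κ i) with hκ | ⟨⟨j₀⟩⟩
    · exact iff_of_eq (congrArg (R i) (Subsingleton.elim _ _))
    · have hfib : (fun j => g (h (t j).2) (t j).1) = fun j => g (h (t j₀).2) (t j).1 :=
        funext fun j => by rw [hs j j₀]
      rw [hfib]
      exact H _ i _

end

/-- The automorphisms of the wreath product `A ≀ B` of two relational structures
over disjoint signatures are exactly the maps `(a,b) ↦ (g_{h(b)}(a), h(b))` where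
`h` is an automorphism of `B` and each `g_c` is an automorphism of `A`. -/
theorem stmt_6 {A B : Type*} {ιτ ισ : Type*} (arτ : ιτ → ℕ) (arσ : ισ → ℕ)
    (RA : ∀ i, (Fin (arτ i) → A) → Prop) (RB : ∀ i, (Fin (arσ i) → B) → Prop)
    (w : A × B ≃ A × B) :
    ((∀ p q : A × B, (w p).2 = (w q).2 ↔ p.2 = q.2) ∧
     (∀ (i : ιτ) (t : Fin (arτ i) → A × B),
       (((∀ j k, (w (t j)).2 = (w (t k)).2) ∧ RA i (fun j => (w (t j)).1)) ↔
        ((∀ j k, (t j).2 = (t k).2) ∧ RA i (fun j => (t j).1)))) ∧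
     (∀ (i : ισ) (t : Fin (arσ i) → A × B),
       (RB i (fun j => (w (t j)).2) ↔ RB i (fun j => (t j).2)))) ↔
    (∃ (h : B ≃ B) (g : B → A ≃ A),
      (∀ (i : ισ) (t : Fin (arσ i) → B), RB i (fun j => h (t j)) ↔ RB i t) ∧
      (∀ (b : B) (i : ιτ) (t : Fin (arτ i) → A), RA i (fun j => g b (t j)) ↔ RA i t) ∧
      (∀ p : A × B, w p = (g (h p.2) p.1, h p.2))) := by
  constructor
  · rintro ⟨hfib, hτ, hσ⟩
    rcases isEmpty_or_nonempty A with hA | hA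
    · exact ⟨Equiv.refl B, fun _ => Equiv.refl A, fun _ _ => Iff.rfl, fun _ _ _ => Iff.rfl,
        fun p => isEmptyElim p.1⟩
    obtain ⟨h, g, hw⟩ := w.exists_eq_fiberwise_of_snd_eq_iff hfib
    refine ⟨h, g, fun i t => ?_, (forall_rel_fiberwise_iff RA w h g hw).1 hτ, hw⟩
    simpa only [hw] using hσ i fun j => (hA.some, t j)
  · rintro ⟨h, g, hh, hg, hw⟩
    refine ⟨fun p q => ?_, (forall_rel_fiberwise_iff RA w h g hw).2 hg, fun i t => ?_⟩
    · simp only [hw, h.apply_eq_iff_eq]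
    · simpa only [hw] using hh i fun j => (t j).2
end

section
/- Let A and B be relational structures over disjoint signatures. If A has no algebraicity, then the wreath product A ≀ B has no algebraicity. That is, for every finite tuple t̄ of elements of A × B and every element (a', b') not among the entries of t̄, there exists an automorphism of A ≀ B fixing every entry of t̄ and moving (a', b'). -/
/-- Arities of the wreath-product signature: the lifted `τ`-relations, the lifted
`σ`-relations, and the binary equivalence relation `E`. -/
@[reducible] def wAr {ιτ ισ : Type*} (arτ : ιτ → ℕ) (arσ : ισ → ℕ) : ιτ ⊕ (ισ ⊕ Unit) → ℕ
  | .inl i => arτ i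
  | .inr (.inl i) => arσ i
  | .inr (.inr _) => 2

/-- Relations of the wreath product `A ≀ B` on domain `A × B`. -/
def wRel {A B ιτ ισ : Type*} (arτ : ιτ → ℕ) (arσ : ισ → ℕ)
    (RA : ∀ i, (Fin (arτ i) → A) → Prop) (RB : ∀ i, (Fin (arσ i) → B) → Prop) :
    ∀ i : ιτ ⊕ (ισ ⊕ Unit), (Fin (wAr arτ arσ i) → A × B) → Prop
  | .inl i => fun t => (∀ j k, (t j).2 = (t k).2) ∧ RA i (fun j => (t j).1)
  | .inr (.inl i) => fun t => RB i (fun j => (t j).2)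
  | .inr (.inr _) => fun t => (t 0).2 = (t 1).2

/-- A bijection is an automorphism of a relational structure if it preserves all
relations in both directions. -/
def IsAut {X ι : Type*} (ar : ι → ℕ) (R : ∀ i, (Fin (ar i) → X) → Prop) (g : X ≃ X) : Prop :=
  ∀ (i : ι) (u : Fin (ar i) → X), R i (fun j => g (u j)) ↔ R i u

/-!
Fix the fibre `A × {b'}` of the point `(a', b')` to be moved. The entries of the tuple in that
fibre form a finite tuple of `A` avoiding `a'` (pad the entries in other fibres with some
`c ≠ a'`, which exists by the hypothesis on the empty tuple), so some automorphism `g` of `A`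
fixes them and moves `a'`. Acting by `g` on the fibre over `b'` and by the identity on all
other fibres is an automorphism of `A ≀ B`: every lifted `τ`-relation lives in a single fibre,
and the `σ`-relations and `E` only see second coordinates.
-/

def NoAlgebraicity {X ι : Type*} (ar : ι → ℕ) (R : ∀ i, (Fin (ar i) → X) → Prop) : Prop :=
  ∀ (k : ℕ) (t : Fin k → X) (x : X), (∀ j, t j ≠ x) →
    ∃ g : X ≃ X, IsAut ar R g ∧ (∀ j, g (t j) = t j) ∧ g x ≠ x

theorem isAut_refl {X ι : Type*} {ar : ι → ℕ} {R : ∀ i, (Fin (ar i) → X) → Prop} :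
    IsAut ar R (Equiv.refl X) :=
  fun _ _ => Iff.rfl

section Wreath

variable {A B ιτ ισ : Type*} {arτ : ιτ → ℕ} {arσ : ισ → ℕ}
  {RA : ∀ i, (Fin (arτ i) → A) → Prop} {RB : ∀ i, (Fin (arσ i) → B) → Prop}

def wreathAut (g : B → A ≃ A) (h : B ≃ B) : A × B ≃ A × B :=
  (Equiv.prodCongrLeft g).trans ((Equiv.refl A).prodCongr h)

@[simp]
theorem wreathAut_apply (g : B → A ≃ A) (h : B ≃ B) (x : A × B) :
    wreathAut g h x = (g x.2 x.1, h x.2) :=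
  rfl

theorem fiberwise_apply_iff {n : ℕ} {R : (Fin n → A) → Prop} {g : B → A ≃ A}
    (hg : ∀ b, ∀ u, R (fun j => g b (u j)) ↔ R u) {u : Fin n → A × B}
    (hfib : ∀ j k, (u j).2 = (u k).2) :
    R (fun j => g (u j).2 (u j).1) ↔ R (fun j => (u j).1) := by
  rcases isEmpty_or_nonempty (Fin n) with hn | hn
  · rw [Subsingleton.elim (fun j => g (u j).2 (u j).1) (fun j => (u j).1)]
  · obtain ⟨j₀⟩ := hn
    have hconst : (fun j => g (u j).2 (u j).1) = fun j => g (u j₀).2 (u j).1 :=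
      funext fun j => by rw [hfib j j₀]
    rw [hconst]
    exact hg _ _

theorem isAut_wreathAut {g : B → A ≃ A} {h : B ≃ B} (hg : ∀ b, IsAut arτ RA (g b))
    (hh : IsAut arσ RB h) : IsAut (wAr arτ arσ) (wRel arτ arσ RA RB) (wreathAut g h) := by
  rintro (i | i | -) u
  · simp only [wRel, wreathAut_apply, h.injective.eq_iff]
    exact and_congr_right fun hfib => fiberwise_apply_iff (fun b => hg b i) hfib
  · exact hh i _
  · exact h.injective.eq_iff

theorem NoAlgebraicity.exists_fix_fiber (hA : NoAlgebraicity arτ RA) {k : ℕ}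
    (t : Fin k → A × B) {p : A × B} (hp : ∀ j, t j ≠ p) :
    ∃ g : A ≃ A, IsAut arτ RA g ∧ (∀ j, (t j).2 = p.2 → g (t j).1 = (t j).1) ∧ g p.1 ≠ p.1 := by
  classical
  obtain ⟨g₀, -, -, hg₀⟩ := hA 0 Fin.elim0 p.1 fun j => j.elim0
  let s : Fin k → A := fun j => if (t j).2 = p.2 then (t j).1 else g₀ p.1
  have hs : ∀ j, s j ≠ p.1 := by
    intro j
    by_cases hj : (t j).2 = p.2
    · simpa [s, hj] using fun h₁ => hp j (Prod.ext h₁ hj)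
    · simpa [s, hj] using hg₀
  obtain ⟨g, hgAut, hgfix, hgmove⟩ := hA k s p.1 hs
  refine ⟨g, hgAut, fun j hj => ?_, hgmove⟩
  simpa [s, hj] using hgfix j

theorem NoAlgebraicity.wreath (hA : NoAlgebraicity arτ RA) :
    NoAlgebraicity (wAr arτ arσ) (wRel arτ arσ RA RB) := by
  classical
  intro k t p hp
  obtain ⟨g, hgAut, hgfix, hgmove⟩ := hA.exists_fix_fiber t hp
  let gFib : B → A ≃ A := Function.update (fun _ => Equiv.refl A) p.2 g
  have hgFib : ∀ b, IsAut arτ RA (gFib b) := by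
    intro b
    by_cases hb : b = p.2
    · simpa [gFib, hb] using hgAut
    · simpa [gFib, hb] using isAut_refl
  refine ⟨wreathAut gFib (Equiv.refl B), isAut_wreathAut hgFib isAut_refl, fun j => ?_, ?_⟩
  · by_cases hj : (t j).2 = p.2
    · ext <;> simp [gFib, hj, hgfix j hj]
    · simp [gFib, hj]
  · simpa [gFib, Prod.ext_iff] using hgmove

end Wreath

/-- If `A` has no algebraicity, then the wreath product `A ≀ B` has no
algebraicity: any element outside a finite tuple can be moved by an automorphism
fixing the tuple pointwise. -/
theorem stmt_7 {A B : Type*} {ιτ ισ : Type*} (arτ : ιτ → ℕ) (arσ : ισ → ℕ)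
    (RA : ∀ i, (Fin (arτ i) → A) → Prop) (RB : ∀ i, (Fin (arσ i) → B) → Prop)
    (hA : ∀ (k : ℕ) (t : Fin k → A) (a' : A), (∀ j, t j ≠ a') →
      ∃ g : A ≃ A, IsAut arτ RA g ∧ (∀ j, g (t j) = t j) ∧ g a' ≠ a') :
    ∀ (k : ℕ) (t : Fin k → A × B) (p : A × B), (∀ j, t j ≠ p) →
      ∃ w : A × B ≃ A × B, IsAut (wAr arτ arσ) (wRel arτ arσ RA RB) w ∧
        (∀ j, w (t j) = t j) ∧ w p ≠ p :=
  NoAlgebraicity.wreath hA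
end

section
/- Let A and B be relational structures over disjoint signatures. If both A and B are homogeneous, then the wreath product A ≀ B is homogeneous: every isomorphism between finite substructures of A ≀ B extends to an automorphism of A ≀ B. -/
/-- A relational structure is homogeneous if every isomorphism between finite
induced substructures (given by injective enumerations satisfying the same
relations) extends to an automorphism. -/
def Homog {X ι : Type*} (ar : ι → ℕ) (R : ∀ i, (Fin (ar i) → X) → Prop) : Prop :=
  ∀ (k : ℕ) (s t : Fin k → X), Function.Injective s → Function.Injective t →
    (∀ (i : ι) (m : Fin (ar i) → Fin k), R i (fun j => s (m j)) ↔ R i (fun j => t (m j))) →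
    ∃ g : X ≃ X, IsAut ar R g ∧ ∀ j, g (s j) = t j

/-!
Given a finite partial isomorphism `s ↦ t` of `A ≀ B`, the relation `E` forces the
second coordinates to form a partial isomorphism of `B` (up to repetitions), and inside
each `E`-class the first coordinates to form a partial isomorphism of `A`. Homogeneity of
`B` gives an automorphism `h` of `B`, homogeneity of `A` gives for every `b` an
automorphism `F b` of `A` handling the class over `b`, and `(a, b) ↦ (F b a, h b)` is an
automorphism of `A ≀ B` extending `s ↦ t`.
-/

open Function

def SameRelations {X ι κ : Type*} (ar : ι → ℕ) (R : ∀ i, (Fin (ar i) → X) → Prop)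
    (s t : κ → X) : Prop :=
  ∀ (i : ι) (m : Fin (ar i) → κ), R i (fun j => s (m j)) ↔ R i (fun j => t (m j))

theorem exists_fin_injective_reindex {κ X : Type*} [Finite κ] (s : κ → X) :
    ∃ (n : ℕ) (r : Fin n → κ), Injective (s ∘ r) ∧ ∀ j, ∃ p, s (r p) = s j := by
  obtain ⟨n, ⟨e⟩⟩ := Finite.exists_equiv_fin (Set.range s)
  refine ⟨n, Set.rangeSplitting s ∘ e.symm, ?_, fun j => ⟨e ⟨s j, j, rfl⟩, ?_⟩⟩
  · intro p q hpq
    simp only [comp_apply, Set.apply_rangeSplitting] at hpq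
    exact e.symm.injective (Subtype.ext hpq)
  · simp [Set.apply_rangeSplitting]

theorem Homog.extend {X ι κ : Type*} [Finite κ] {ar : ι → ℕ}
    {R : ∀ i, (Fin (ar i) → X) → Prop} (hX : Homog ar R) (s t : κ → X)
    (hker : ∀ j j', s j = s j' ↔ t j = t j') (hrel : SameRelations ar R s t) :
    ∃ g : X ≃ X, IsAut ar R g ∧ ∀ j, g (s j) = t j := by
  obtain ⟨n, r, hr, hr_surj⟩ := exists_fin_injective_reindex s
  have htr : Injective (t ∘ r) := fun p q hpq => hr ((hker _ _).2 hpq)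
  obtain ⟨g, hg, hgs⟩ := hX n (s ∘ r) (t ∘ r) hr htr fun i m => hrel i (r ∘ m)
  refine ⟨g, hg, fun j => ?_⟩
  obtain ⟨p, hp⟩ := hr_surj j
  rw [← hp, ← (hker _ _).1 hp]
  exact hgs p

section Wreath

variable {A B ιτ ισ : Type*} {arτ : ιτ → ℕ} {arσ : ισ → ℕ}
  {RA : ∀ i, (Fin (arτ i) → A) → Prop} {RB : ∀ i, (Fin (arσ i) → B) → Prop}

def wreathEquiv (h : B ≃ B) (F : B → A ≃ A) : A × B ≃ A × B :=
  (Equiv.prodCongrLeft F).trans (Equiv.prodCongr (Equiv.refl A) h)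

@[simp]
theorem wreathEquiv_apply (h : B ≃ B) (F : B → A ≃ A) (x : A × B) :
    wreathEquiv h F x = (F x.2 x.1, h x.2) :=
  rfl

theorem isAut_apply_fiber_iff {F : B → A ≃ A} (hF : ∀ b, IsAut arτ RA (F b)) {i : ιτ}
    {u : Fin (arτ i) → A × B} (hu : ∀ j k, (u j).2 = (u k).2) :
    RA i (fun j => F (u j).2 (u j).1) ↔ RA i (fun j => (u j).1) := by
  rcases isEmpty_or_nonempty (Fin (arτ i)) with _ | ⟨⟨j₀⟩⟩
  · rw [Subsingleton.elim (fun j => F (u j).2 (u j).1) (fun j => (u j).1)]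
  · have hconst : (fun j => F (u j).2 (u j).1) = fun j => F (u j₀).2 (u j).1 := by
      funext j
      rw [hu j j₀]
    rw [hconst]
    exact hF _ i _

theorem isAut_wreathEquiv {h : B ≃ B} {F : B → A ≃ A} (hh : IsAut arσ RB h)
    (hF : ∀ b, IsAut arτ RA (F b)) :
    IsAut (wAr arτ arσ) (wRel arτ arσ RA RB) (wreathEquiv h F) := by
  rintro (i | i | _) u
  · simp only [wRel, wreathEquiv_apply, h.injective.eq_iff]
    exact and_congr_right (isAut_apply_fiber_iff hF)
  · exact hh i _
  · exact h.injective.eq_iff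

theorem SameRelations.snd_eq_iff {κ : Type*} {s t : κ → A × B}
    (hrel : SameRelations (wAr arτ arσ) (wRel arτ arσ RA RB) s t) (j j' : κ) :
    (s j).2 = (s j').2 ↔ (t j).2 = (t j').2 := by
  simpa [wRel] using hrel (.inr (.inr ())) ![j, j']

theorem SameRelations.exists_isAut_fiber {κ : Type*} [Finite κ] (hA : Homog arτ RA)
    {s t : κ → A × B} (hs : Injective s) (ht : Injective t)
    (hrel : SameRelations (wAr arτ arσ) (wRel arτ arσ RA RB) s t) (b : B) :
    ∃ f : A ≃ A, IsAut arτ RA f ∧ ∀ j, (s j).2 = b → f (s j).1 = (t j).1 := by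
  have hfst_iff {j j' : κ} (hj : (s j).2 = (s j').2) :
      (s j).1 = (s j').1 ↔ (t j).1 = (t j').1 := by
    have htj : (t j).2 = (t j').2 := (hrel.snd_eq_iff j j').1 hj
    calc (s j).1 = (s j').1 ↔ s j = s j' := by simp [Prod.ext_iff, hj]
      _ ↔ t j = t j' := hs.eq_iff.trans ht.eq_iff.symm
      _ ↔ (t j).1 = (t j').1 := by simp [Prod.ext_iff, htj]
  obtain ⟨f, hf, hfs⟩ := hA.extend (κ := {j // (s j).2 = b}) (fun j => (s j).1)
    (fun j => (t j).1) (fun j j' => hfst_iff (j.2.trans j'.2.symm)) fun i m => by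
      have hs_snd : ∀ p q, (s (m p)).2 = (s (m q)).2 := fun p q => (m p).2.trans (m q).2.symm
      have ht_snd : ∀ p q, (t (m p)).2 = (t (m q)).2 :=
        fun p q => (hrel.snd_eq_iff _ _).1 (hs_snd p q)
      exact (and_iff_right hs_snd).symm.trans
        ((hrel (.inl i) fun p => (m p).1).trans (and_iff_right ht_snd))
  exact ⟨f, hf, fun j hj => hfs ⟨j, hj⟩⟩

end Wreath

/-- If `A` and `B` are homogeneous relational structures over disjoint
signatures, then the wreath product `A ≀ B` is homogeneous. -/
theorem stmt_8 {A B : Type*} {ιτ ισ : Type*} (arτ : ιτ → ℕ) (arσ : ισ → ℕ)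
    (RA : ∀ i, (Fin (arτ i) → A) → Prop) (RB : ∀ i, (Fin (arσ i) → B) → Prop)
    (hA : Homog arτ RA) (hB : Homog arσ RB) :
    Homog (wAr arτ arσ) (wRel arτ arσ RA RB) := by
  intro k s t hs ht (hrel : SameRelations _ _ s t)
  obtain ⟨h, hh, hhs⟩ := hB.extend (fun j => (s j).2) (fun j => (t j).2)
    hrel.snd_eq_iff fun i m => hrel (.inr (.inl i)) m
  choose F hF hFs using hrel.exists_isAut_fiber hA hs ht
  exact ⟨wreathEquiv h F, isAut_wreathEquiv hh hF, fun j => Prod.ext (hFs _ j rfl) (hhs j)⟩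
end

section
/- Let S be a set with at least 3 elements and let g : Sⁿ → X be a cyclic operation (g(x₁,...,xₙ) = g(x₂,...,xₙ,x₁) for all inputs), where n ≥ 2. Then g does not preserve inequality: there exist tuples (a₁,...,aₙ), (b₁,...,bₙ) over S with aᵢ ≠ bᵢ for all i and g(ā) = g(b̄). In particular, this can be witnessed by arranging three distinct elements s₁, s₂, s₃ into the arguments according to n mod 3. -/
/-!
Colour position `i` of a tuple by `i mod 3` using three distinct elements, and compare the
tuple with its rotation by `k`, where `k ∈ {1, 2}` is chosen so that `k ≢ 0` and `k ≢ n (mod 3)`.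
A position that does not wrap around moves by `k`, one that wraps moves by `k - n`; either way
its colour changes. Cyclicity makes `g` take the same value on a tuple and on its rotations.
-/

theorem Nat.add_mod_mod_three_ne {n k i : ℕ} (hk : k ≤ n) (hi : i < n) (hk3 : k % 3 ≠ 0)
    (hkn : k % 3 ≠ n % 3) : (i + k) % n % 3 ≠ i % 3 := by
  by_cases hwrap : i + k < n
  · rw [Nat.mod_eq_of_lt hwrap]
    omega
  · rw [Nat.mod_eq_sub_mod (not_lt.mp hwrap), Nat.mod_eq_of_lt (show i + k - n < n by omega)]
    omega

theorem apply_comp_finRotate_iterate {S X : Type*} {n : ℕ} {g : (Fin n → S) → X}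
    (hcyc : ∀ x : Fin n → S, g x = g (fun i => x (finRotate n i))) (x : Fin n → S) (k : ℕ) :
    g (x ∘ (finRotate n)^[k]) = g x := by
  induction k with
  | zero => rfl
  | succ k ih => exact (hcyc _).symm.trans ih

theorem exists_forall_ne_and_eq_of_cyclic {S X : Type*} (c : Fin 3 ↪ S) {n : ℕ} (hn : 2 ≤ n)
    (g : (Fin n → S) → X) (hcyc : ∀ x : Fin n → S, g x = g (fun i => x (finRotate n i))) :
    ∃ a b : Fin n → S, (∀ i, a i ≠ b i) ∧ g a = g b := by
  obtain ⟨k, hkn, hk3, hk⟩ : ∃ k < n, k % 3 ≠ 0 ∧ k % 3 ≠ n % 3 := by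
    by_cases h : n % 3 = 1
    exacts [⟨2, by omega⟩, ⟨1, by omega⟩]
  let a : Fin n → S := fun i => c ⟨i % 3, by omega⟩
  refine ⟨a, a ∘ finCycle ⟨k, hkn⟩, fun i hi => ?_, ?_⟩
  · refine Nat.add_mod_mod_three_ne hkn.le i.isLt hk3 hk ?_
    simpa [a, Fin.val_add] using (c.injective hi).symm
  · rw [finCycle_eq_finRotate_iterate, apply_comp_finRotate_iterate hcyc]

/-- A cyclic operation of arity `n ≥ 2` on a set with at least 3 elements does not
preserve inequality: some pair of componentwise-distinct tuples gets equal values. -/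
theorem stmt_13 {S X : Type*} (s₁ s₂ s₃ : S) (h12 : s₁ ≠ s₂) (h13 : s₁ ≠ s₃)
    (h23 : s₂ ≠ s₃) (n : ℕ) (hn : 2 ≤ n) (g : (Fin n → S) → X)
    (hcyc : ∀ x : Fin n → S, g x = g (fun i => x (finRotate n i))) :
    ∃ a b : Fin n → S, (∀ i, a i ≠ b i) ∧ g a = g b := by
  have hinj : Function.Injective ![s₁, s₂, s₃] := by
    intro i j h
    fin_cases i <;> fin_cases j <;> simp_all [eq_comm]
  exact exists_forall_ne_and_eq_of_cyclic ⟨_, hinj⟩ hn g hcyc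
end
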